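/- Let X be a Banach space, V ⊆ X an open set, and G : V → ℝ a C² function with Ĝ := inf_{v∈V} G(v) finite. Suppose there exist constants τ₀, a₀, C₀ ∈ (0,∞) and a minimizing sequence (v_k) ⊆ V such that for all τ with |τ| < τ₀, all φ in the closed unit ball of X, and all k, one has v_k + τφ ∈ V and ‖G''(v_k + τφ)‖ < C₀/(1 − |τ|a₀)². Then ‖G'(v_k)‖_{X*} → 0 as k → ∞. -/
import Mathlib


open Filter Topology

/-- Ekeland-type theorem for smooth functionals (Theorem A.1 / thm:Ek):
if a minimizing sequence admits uniform second-derivative bounds on small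
perturbations staying in the open domain, then the first derivative tends to zero. -/
theorem stmt0
    {X : Type*} [NormedAddCommGroup X] [NormedSpace ℝ X] [CompleteSpace X]
    (V : Set X) (hV : IsOpen V) (G : X → ℝ) (hG : ContDiffOn ℝ 2 G V)
    (m : ℝ) (hm : IsGLB (G '' V) m)
    (τ₀ a₀ C₀ : ℝ) (hτ₀ : 0 < τ₀) (ha₀ : 0 < a₀) (hC₀ : 0 < C₀)
    (v : ℕ → X) (hv : ∀ k, v k ∈ V)
    (hmin : Tendsto (fun k => G (v k)) atTop (𝓝 m))
    (hmem : ∀ τ : ℝ, |τ| < τ₀ → ∀ φ : X, ‖φ‖ ≤ 1 → ∀ k, v k + τ • φ ∈ V)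
    (hbound : ∀ τ : ℝ, |τ| < τ₀ → ∀ φ : X, ‖φ‖ ≤ 1 → ∀ k,
      ‖fderiv ℝ (fderiv ℝ G) (v k + τ • φ)‖ < C₀ / (1 - |τ| * a₀) ^ 2) :
    Tendsto (fun k => ‖fderiv ℝ G (v k)‖) atTop (𝓝 0) := by
  -- decomposition: any point close to `v k` is of the form `v k + τ • φ`
  have hdec : ∀ k, ∀ y : X, ‖y - v k‖ < τ₀ → y ∈ V ∧
      ‖fderiv ℝ (fderiv ℝ G) y‖ < C₀ / (1 - ‖y - v k‖ * a₀) ^ 2 := by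
    intro k y hy
    rcases eq_or_ne y (v k) with rfl | hne
    · have h0 : |(0:ℝ)| < τ₀ := by simpa using hτ₀
      have h1 : ‖(0:X)‖ ≤ 1 := by simp
      have := hbound 0 h0 0 h1 k
      have hmemV := hmem 0 h0 0 h1 k
      simp only [zero_smul, add_zero] at this hmemV
      refine ⟨hmemV, ?_⟩
      simpa using this
    · set t : ℝ := ‖y - v k‖ with ht
      have htpos : 0 < t := by
        simpa [ht] using sub_ne_zero.mpr hne
      set φ : X := t⁻¹ • (y - v k) with hφ
      have hφ1 : ‖φ‖ = 1 := by
        rw [hφ, norm_smul, norm_inv, Real.norm_eq_abs, abs_of_pos htpos, ← ht,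
          inv_mul_cancel₀ htpos.ne']
      have hyt : v k + t • φ = y := by
        rw [hφ, smul_smul, mul_inv_cancel₀ htpos.ne', one_smul]; abel
      have habs : |t| < τ₀ := by rwa [abs_of_pos htpos]
      have hb := hbound t habs φ hφ1.le k
      have hmemV := hmem t habs φ hφ1.le k
      rw [hyt] at hb hmemV
      rw [abs_of_pos htpos] at hb
      exact ⟨hmemV, hb⟩
  set M : ℝ := 4 * C₀ with hM
  have hMpos : 0 < M := by positivity
  set τ₁ : ℝ := min (τ₀ / 2) (1 / (2 * a₀)) with hτ₁
  have hτ₁pos : 0 < τ₁ := lt_min (by linarith) (by positivity)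
  have hτ₁lt : τ₁ < τ₀ := (min_le_left _ _).trans_lt (by linarith)
  have hτ₁a : τ₁ * a₀ ≤ 1 / 2 := by
    have h := min_le_right (τ₀ / 2) (1 / (2 * a₀))
    rw [← hτ₁] at h
    calc τ₁ * a₀ ≤ (1 / (2 * a₀)) * a₀ := by
          exact mul_le_mul_of_nonneg_right h ha₀.le
      _ = 1 / 2 := by field_simp
  -- key estimate
  have key : ∀ τ : ℝ, 0 < τ → τ ≤ τ₁ → ∀ k,
      ‖fderiv ℝ G (v k)‖ ≤ (G (v k) - m) / τ + M * τ := by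
    intro τ hτpos hττ₁ k
    set x := v k with hx
    set s : Set X := Metric.closedBall x τ with hs
    have hsV : s ⊆ V := by
      intro z hz
      have : ‖z - x‖ < τ₀ := by
        have := Metric.mem_closedBall.1 hz
        rw [dist_eq_norm] at this
        linarith
      exact (hdec k z this).1
    -- second derivative bound on s
    have hDD : ∀ z ∈ s, ‖fderiv ℝ (fderiv ℝ G) z‖ ≤ M := by
      intro z hz
      have hzx : ‖z - x‖ ≤ τ := by
        have := Metric.mem_closedBall.1 hz
        rwa [dist_eq_norm] at this
      have hzx' : ‖z - x‖ < τ₀ := by linarith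
      have hb := (hdec k z hzx').2
      have h1 : ‖z - x‖ * a₀ ≤ 1 / 2 := by
        calc ‖z - x‖ * a₀ ≤ τ₁ * a₀ :=
              mul_le_mul_of_nonneg_right (hzx.trans hττ₁) ha₀.le
          _ ≤ 1 / 2 := hτ₁a
      have h2 : (1:ℝ) / 2 ≤ 1 - ‖z - x‖ * a₀ := by linarith
      have h3 : (1/2:ℝ)^2 ≤ (1 - ‖z - x‖ * a₀)^2 := by nlinarith [norm_nonneg (z - x)]
      have h4 : C₀ / (1 - ‖z - x‖ * a₀) ^ 2 ≤ C₀ / (1/2)^2 :=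
        div_le_div_of_nonneg_left hC₀.le (by norm_num) h3
      have : C₀ / ((1:ℝ)/2)^2 = M := by rw [hM]; ring
      linarith
    -- G is differentiable on V, fderiv G is differentiable on V
    have hGdiff : ∀ z ∈ s, DifferentiableAt ℝ G z := fun z hz =>
      (hG.differentiableOn (by norm_num)).differentiableAt (hV.mem_nhds (hsV hz))
    have hDGdiff : ∀ z ∈ s, DifferentiableAt ℝ (fderiv ℝ G) z := fun z hz =>
      ((hG.fderiv_of_isOpen (m := 1) hV (by norm_num)).differentiableOn
        (by norm_num)).differentiableAt (hV.mem_nhds (hsV hz))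
    have hconv : Convex ℝ s := convex_closedBall x τ
    have hxs : x ∈ s := Metric.mem_closedBall_self hτpos.le
    -- Lipschitz bound on fderiv G on s
    have hLip : ∀ z ∈ s, ‖fderiv ℝ (fderiv ℝ G) z‖ ≤ M := hDD
    have hstep1 : ∀ z ∈ s, ‖fderiv ℝ G z - fderiv ℝ G x‖ ≤ M * τ := by
      intro z hz
      have := hconv.norm_image_sub_le_of_norm_fderiv_le hDGdiff hLip hxs hz
      have hzx : ‖z - x‖ ≤ τ := by
        have := Metric.mem_closedBall.1 hz; rwa [dist_eq_norm] at this
      calc ‖fderiv ℝ G z - fderiv ℝ G x‖ ≤ M * ‖z - x‖ := this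
        _ ≤ M * τ := mul_le_mul_of_nonneg_left hzx hMpos.le
    -- Taylor estimate for any direction
    have htaylor : ∀ φ : X, ‖φ‖ ≤ 1 →
        |G (x + τ • φ) - G x - (fderiv ℝ G x) (τ • φ)| ≤ (M * τ) * τ := by
      intro φ hφ
      have hys : x + τ • φ ∈ s := by
        rw [hs, Metric.mem_closedBall, dist_eq_norm]
        have : x + τ • φ - x = τ • φ := by abel
        rw [this, norm_smul, Real.norm_eq_abs, abs_of_pos hτpos]
        calc τ * ‖φ‖ ≤ τ * 1 := mul_le_mul_of_nonneg_left hφ hτpos.le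
          _ = τ := mul_one τ
      have := hconv.norm_image_sub_le_of_norm_fderiv_le' hGdiff hstep1 hxs hys
      have heq : x + τ • φ - x = τ • φ := by abel
      rw [heq] at this
      have hn : ‖τ • φ‖ ≤ τ := by
        rw [norm_smul, Real.norm_eq_abs, abs_of_pos hτpos]
        calc τ * ‖φ‖ ≤ τ * 1 := mul_le_mul_of_nonneg_left hφ hτpos.le
          _ = τ := mul_one τ
      calc |G (x + τ • φ) - G x - (fderiv ℝ G x) (τ • φ)|
          ≤ (M * τ) * ‖τ • φ‖ := this
        _ ≤ (M * τ) * τ := by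
            exact mul_le_mul_of_nonneg_left hn (by positivity)
    -- pointwise bound on the derivative
    have hpt : ∀ φ : X, ‖φ‖ = 1 → ‖(fderiv ℝ G x) φ‖ ≤ (G x - m) / τ + M * τ := by
      intro φ hφ
      have hlow : ∀ ψ : X, ‖ψ‖ ≤ 1 → -((G x - m) / τ + M * τ) ≤ (fderiv ℝ G x) ψ := by
        intro ψ hψ
        have ht := htaylor ψ hψ
        have hmle : m ≤ G (x + τ • ψ) :=
          hm.1 ⟨x + τ • ψ, hsV (by
            rw [hs, Metric.mem_closedBall, dist_eq_norm]
            have heq : x + τ • ψ - x = τ • ψ := by abel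
            rw [heq, norm_smul, Real.norm_eq_abs, abs_of_pos hτpos]
            calc τ * ‖ψ‖ ≤ τ * 1 := mul_le_mul_of_nonneg_left hψ hτpos.le
              _ = τ := mul_one τ), rfl⟩
        have hsmul : (fderiv ℝ G x) (τ • ψ) = τ * (fderiv ℝ G x) ψ := by
          rw [map_smul]; rfl
        rw [hsmul] at ht
        rw [abs_le] at ht
        have h1 : τ * (fderiv ℝ G x) ψ ≥ m - G x - M * τ * τ := by nlinarith [ht.2]
        rw [ge_iff_le, ← sub_nonneg] at h1
        have hτne : τ ≠ 0 := hτpos.ne'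
        have expand : (fderiv ℝ G x) ψ - -((G x - m) / τ + M * τ)
            = (τ * (fderiv ℝ G x) ψ - (m - G x - M * τ * τ)) / τ := by
          field_simp
          ring
        have h2 : 0 ≤ (τ * (fderiv ℝ G x) ψ - (m - G x - M * τ * τ)) / τ :=
          div_nonneg h1 hτpos.le
        rw [← expand] at h2
        linarith
      have hup : (fderiv ℝ G x) φ ≤ (G x - m) / τ + M * τ := by
        have := hlow (-φ) (by rw [norm_neg, hφ])
        rw [map_neg] at this
        linarith
      have hlo : -((G x - m) / τ + M * τ) ≤ (fderiv ℝ G x) φ := hlow φ hφ.le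
      rw [Real.norm_eq_abs, abs_le]
      exact ⟨hlo, hup⟩
    have hB : 0 ≤ (G x - m) / τ + M * τ := by
      have := hpt 0
      -- can't use φ = 0 (norm 1 needed); derive nonnegativity directly
      have hmle : m ≤ G x := hm.1 ⟨x, hv k, rfl⟩
      have : 0 ≤ (G x - m) / τ := div_nonneg (by linarith) hτpos.le
      nlinarith
    exact ContinuousLinearMap.opNorm_le_of_unit_norm hB hpt
  -- conclude the limit
  rw [Metric.tendsto_atTop]
  intro ε hε
  set τ : ℝ := min τ₁ (ε / (2 * M)) with hτ
  have hτpos : 0 < τ := lt_min hτ₁pos (by positivity)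
  have hττ₁ : τ ≤ τ₁ := min_le_left _ _
  have hMτ : M * τ ≤ ε / 2 := by
    have h := min_le_right τ₁ (ε / (2 * M))
    rw [← hτ] at h
    calc M * τ ≤ M * (ε / (2 * M)) := mul_le_mul_of_nonneg_left h hMpos.le
      _ = ε / 2 := by field_simp
  have hquot : Tendsto (fun k => (G (v k) - m) / τ) atTop (𝓝 0) := by
    have := (hmin.sub_const m).div_const τ
    simpa using this
  have hev : ∀ᶠ k in atTop, (G (v k) - m) / τ < ε / 2 :=
    hquot.eventually_lt_const (by linarith)
  rcases hev.exists_forall_of_atTop with ⟨N, hN⟩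
  refine ⟨N, fun k hk => ?_⟩
  have h1 := key τ hτpos hττ₁ k
  have h2 := hN k hk
  rw [Real.dist_eq, sub_zero, abs_of_nonneg (norm_nonneg _)]
  linarith
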